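/- arXiv:math/0305042 — 3 statements merged into one kernel-verified Lean document; each statement's English description precedes it below -/
import Mathlib

section
/- Let v = (1,0,−m) in the Mukai lattice of a K3 surface, m ≥ 1, and w = (1,0,m). If g is an isometry of v^⊥ (extended to the Mukai lattice fixing v) with g(w) = (r, kL, rm) for an integer r, integer k and primitive class L ∈ H^2(S,Z), then 2m divides both k and r−1; writing k = 2mc and r−1 = 2mρ, the equation c²(L·L) = 2ρ + 2mρ² holds, and gcd(c, r) = 1. -/
/-- The Mukai pairing on `ℤ ⊕ M ⊕ ℤ`. -/
def mukaiForm {R : Type} [CommRing R] {M : Type} [AddCommGroup M] [Module R M]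
    (B : M →ₗ[R] M →ₗ[R] R) : (R × M × R) →ₗ[R] (R × M × R) →ₗ[R] R :=
  LinearMap.mk₂ R (fun x y => B x.2.1 y.2.1 - x.1 * y.2.2 - y.1 * x.2.2)
    (fun x x' y => by simp [add_mul]; ring)
    (fun c x y => by simp [smul_eq_mul]; ring)
    (fun x y y' => by simp [mul_add]; ring)
    (fun c x y => by simp [smul_eq_mul]; ring)

/-!
Since `w - v = 2m • (0,0,1)` and `g v = v`, the vector `g w - v = (r - 1, kL, (r+1)m)` is
`2m • u` with `u = g (0,0,1)`; pairing `kL = 2m • u₂` against a class `y` with `L·y = 1`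
(which exists because `L` is primitive and the lattice unimodular) gives `k = 2m c`.
The relation `⟨gw, gw⟩ = ⟨w, w⟩ = -2m` becomes the quadratic equation after cancelling
`4m²`, and `⟨gw, u⟩ = ⟨w, (0,0,1)⟩ = -1` is a Bézout identity for `c` and `r`.
-/

lemma mukaiForm_apply {R : Type} [CommRing R] {M : Type} [AddCommGroup M] [Module R M]
    (B : M →ₗ[R] M →ₗ[R] R) (x y : R × M × R) :
    mukaiForm B x y = B x.2.1 y.2.1 - x.1 * y.2.2 - y.1 * x.2.2 := rfl

lemma LinearMap.exists_eq_smul_of_forall_dvd {M : Type} [AddCommGroup M] [Module ℤ M]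
    (f : M →ₗ[ℤ] ℤ) (a : ℤ) (hdvd : ∀ y, a ∣ f y) : ∃ ψ : M →ₗ[ℤ] ℤ, f = a • ψ := by
  refine ⟨⟨⟨fun y => f y / a, fun x y => ?_⟩, fun n y => ?_⟩, ?_⟩
  · rw [map_add, Int.add_ediv_of_dvd_left (hdvd x)]
  · simp only [map_smul, RingHom.id_apply, smul_eq_mul]
    exact Int.mul_ediv_assoc _ (hdvd y)
  · ext y
    exact (Int.mul_ediv_cancel' (hdvd y)).symm

lemma exists_apply_eq_one_of_primitive {M : Type} [AddCommGroup M] [Module ℤ M]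
    (B : M →ₗ[ℤ] M →ₗ[ℤ] ℤ) (hunimod : Function.Bijective B) (L : M)
    (hLprim : ∀ (n : ℤ) (c : M), L = n • c → IsUnit n) : ∃ y, B L y = 1 := by
  obtain ⟨a, hspan⟩ := (inferInstance :
    Submodule.IsPrincipal (LinearMap.range (B L) : Ideal ℤ))
  have hdvd : ∀ y, a ∣ B L y := fun y => by
    have hy := LinearMap.mem_range_self (B L) y
    rw [hspan] at hy
    exact Ideal.mem_span_singleton.1 hy
  obtain ⟨ψ, hψ⟩ := (B L).exists_eq_smul_of_forall_dvd a hdvd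
  obtain ⟨L', hL'⟩ := hunimod.2 ψ
  have ha : IsUnit a := hLprim a L' (hunimod.1 (by rw [map_zsmul, hL', hψ]))
  obtain ⟨y, hy⟩ : a ∈ LinearMap.range (B L) := hspan ▸ Submodule.mem_span_singleton_self a
  exact ⟨a • y, by rw [map_zsmul, hy, smul_eq_mul, Int.isUnit_mul_self ha]⟩

lemma quadratic_of_norm_eq {m c ρ N : ℤ} (hm : m ≠ 0)
    (h : (2 * m * c) ^ 2 * N - 2 * (1 + 2 * m * ρ) ^ 2 * m = -2 * m) :
    c ^ 2 * N = 2 * ρ + 2 * m * ρ ^ 2 := by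
  have h4 : (4 * m ^ 2) * (c ^ 2 * N) = (4 * m ^ 2) * (2 * ρ + 2 * m * ρ ^ 2) := by
    linear_combination h
  exact mul_left_cancel₀ (mul_ne_zero four_ne_zero (pow_ne_zero 2 hm)) h4

theorem stabilizer_congruences_general
    (m : ℤ) (hm : 1 ≤ m)
    {M : Type} [AddCommGroup M] [Module ℤ M]
    (B : M →ₗ[ℤ] M →ₗ[ℤ] ℤ)
    (hunimod : Function.Bijective B)
    (g : (ℤ × M × ℤ) →ₗ[ℤ] (ℤ × M × ℤ))
    (hiso : ∀ x y, mukaiForm B (g x) (g y) = mukaiForm B x y)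
    (hgv : g ((1 : ℤ), (0 : M), -m) = ((1 : ℤ), (0 : M), -m))
    (r k : ℤ) (L : M) (hLprim : ∀ (n : ℤ) (c : M), L = n • c → IsUnit n)
    (hgw : g ((1 : ℤ), (0 : M), m) = ((r : ℤ), k • L, r * m)) :
    ∃ c ρ : ℤ, k = 2 * m * c ∧ r = 1 + 2 * m * ρ
      ∧ c ^ 2 * B L L = 2 * ρ + 2 * m * ρ ^ 2
      ∧ IsCoprime c r := by
  obtain ⟨y, hy⟩ := exists_apply_eq_one_of_primitive B hunimod L hLprim
  set u := g (0, 0, 1)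
  have hu : ((r : ℤ), k • L, r * m) = ((1 : ℤ), (0 : M), -m) + (2 * m) • u := by
    have hw : ((1 : ℤ), (0 : M), m)
        = ((1 : ℤ), (0 : M), -m) + (2 * m) • ((0 : ℤ), (0 : M), (1 : ℤ)) := by
      ext <;> simp [zsmul_zero]
      ring
    rw [← hgw, ← hgv, hw, map_add, map_smul]
  have hr : r = 1 + 2 * m * u.1 := by simpa using congrArg Prod.fst hu
  have hk : k = 2 * m * B u.2.1 y := by
    simpa [hy] using congrArg (fun z => B z.2.1 y) hu
  have hnorm : k ^ 2 * B L L - 2 * r ^ 2 * m = -2 * m := by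
    have h := hiso (1, 0, m) (1, 0, m)
    simp only [hgw, mukaiForm_apply, map_zsmul, LinearMap.smul_apply, smul_eq_mul, map_zero] at h
    linear_combination h
  have hpair : k * B L u.2.1 - r * u.2.2 - u.1 * r * m = -1 := by
    have h := hiso (1, 0, m) (0, 0, 1)
    simp only [hgw, mukaiForm_apply, map_zsmul, LinearMap.smul_apply, smul_eq_mul, map_zero] at h
    linear_combination h
  refine ⟨B u.2.1 y, u.1, hk, hr, quadratic_of_norm_eq (by omega) (hk ▸ hr ▸ hnorm),
    -2 * m * B L u.2.1, u.2.2 + u.1 * m, ?_⟩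
  rw [hk] at hpair
  linear_combination -hpair

/-- let `v = (1,0,−m)`, `w = (1,0,m)` in the Mukai lattice of a K3
surface, and let `g` be an isometry of the Mukai lattice fixing `v` with
`g(w) = (r, kL, rm)` for a primitive class `L`.  Then `2m ∣ k`, `2m ∣ r − 1`,
and writing `k = 2mc`, `r − 1 = 2mρ` one has `c²(L·L) = 2ρ + 2mρ²` and
`gcd(c,r) = 1`. -/
theorem stabilizer_congruences
    (m : ℤ) (hm : 1 ≤ m)
    {M : Type} [AddCommGroup M] [Module ℤ M] [Module.Free ℤ M] [Module.Finite ℤ M]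
    (B : M →ₗ[ℤ] M →ₗ[ℤ] ℤ) (hsymm : ∀ x y, B x y = B y x)
    (heven : ∀ c, Even (B c c)) (hunimod : Function.Bijective B)
    (g : (ℤ × M × ℤ) →ₗ[ℤ] (ℤ × M × ℤ)) (hg : Function.Bijective g)
    (hiso : ∀ x y, mukaiForm B (g x) (g y) = mukaiForm B x y)
    (hgv : g ((1 : ℤ), (0 : M), -m) = ((1 : ℤ), (0 : M), -m))
    (r k : ℤ) (L : M) (hLprim : ∀ (n : ℤ) (c : M), L = n • c → IsUnit n)
    (hgw : g ((1 : ℤ), (0 : M), m) = ((r : ℤ), k • L, r * m)) :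
    ∃ c ρ : ℤ, k = 2 * m * c ∧ r = 1 + 2 * m * ρ
      ∧ c ^ 2 * B L L = 2 * ρ + 2 * m * ρ ^ 2
      ∧ IsCoprime c r :=
  stabilizer_congruences_general m hm B hunimod g hiso hgv r k L hLprim hgw
end

section
/- Let v = (1,0,−m), m ≥ 1. Suppose v₀ = (r, L, rm) ∈ v^⊥ satisfies ⟨v₀,v₀⟩ = −2 with L divisible by 2 in H^2(S,Z). Then r is odd, (v₀ − v)/2 is an integral Mukai vector, the lattice Δ₀ = span_Z{v, (v₀−v)/2} has intersection matrix [[2m, −m],[−m, (2m−2)/4]] in this basis, and consequently m ≡ 1 (mod 4). -/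
/-- let `v = (1,0,−m)` and `v₀ = (r, 2L₀, rm) ∈ v^⊥` with
`⟨v₀,v₀⟩ = −2`.  Then `r` is odd, `(v₀ − v)/2` is an integral Mukai vector `u`,
the lattice `span_ℤ{v,u}` has Gram matrix `[[2m, −m],[−m,(2m−2)/4]]`, and
consequently `m ≡ 1 (mod 4)`. -/
theorem even_case_forces_m_mod_four
    (m : ℤ) (hm : 1 ≤ m)
    {M : Type} [AddCommGroup M] [Module ℤ M]
    (B : M →ₗ[ℤ] M →ₗ[ℤ] ℤ) (hsymm : ∀ x y, B x y = B y x)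
    (heven : ∀ c, Even (B c c))
    (r : ℤ) (L₀ : M)
    (hv₀ : mukaiForm B ((r, (2 : ℤ) • L₀, r * m) : ℤ × M × ℤ)
        ((r, (2 : ℤ) • L₀, r * m) : ℤ × M × ℤ) = -2) :
    Odd r ∧ ∃ ρ e : ℤ, r = 2 * ρ + 1 ∧ m = 4 * e + 1
      ∧ ((r, (2 : ℤ) • L₀, r * m) : ℤ × M × ℤ) - ((1 : ℤ), (0 : M), -m)
          = (2 : ℤ) • ((ρ, L₀, m * (ρ + 1)) : ℤ × M × ℤ)
      ∧ mukaiForm B ((1 : ℤ), (0 : M), -m) ((1 : ℤ), (0 : M), -m) = 2 * m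
      ∧ mukaiForm B ((1 : ℤ), (0 : M), -m) ((ρ, L₀, m * (ρ + 1)) : ℤ × M × ℤ) = -m
      ∧ mukaiForm B ((ρ, L₀, m * (ρ + 1)) : ℤ × M × ℤ)
          ((ρ, L₀, m * (ρ + 1)) : ℤ × M × ℤ) = 2 * e := by
  obtain ⟨k, hk⟩ := heven L₀
  have h4 : (4:ℤ) * B L₀ L₀ - 2 * (r * (r * m)) = -2 := by
    have h := hv₀
    simp only [mukaiForm, LinearMap.mk₂_apply] at h
    have h2 : B ((2:ℤ) • L₀) ((2:ℤ) • L₀) = 4 * B L₀ L₀ := by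
      rw [two_zsmul]; simp only [map_add, LinearMap.add_apply]; ring
    rw [h2] at h
    linarith
  have hkey : r * r * m = 4 * k + 1 := by nlinarith [hk]
  have hodd : Odd r := by
    rcases Int.even_or_odd r with ⟨s, hs⟩ | h
    · exfalso
      have : 4 * (s * s * m) = 4 * k + 1 := by subst hs; linarith [hkey]
      omega
    · exact h
  obtain ⟨ρ, hρ⟩ := hodd
  subst hρ
  refine ⟨⟨ρ, rfl⟩, ρ, k - m * ρ * (ρ + 1), rfl, by linear_combination hkey, ?_, ?_, ?_, ?_⟩
  · refine Prod.ext ?_ (Prod.ext ?_ ?_) <;> simp <;> ring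
  · simp [mukaiForm]; ring
  · simp [mukaiForm]; ring
  · simp only [mukaiForm, LinearMap.mk₂_apply]
    rw [hk]; ring
end

section
/- Let Λ be the even unimodular K3 lattice −E₈ ⊕ −E₈ ⊕ H ⊕ H ⊕ H (signature (3,19)), M = [[2a, b],[b, 2d]] a symmetric integer matrix, and λ₁ ∈ Λ a primitive element with (λ₁,λ₁) = 2a. Then there exists a primitive rank-2 sublattice Σ ⊂ Λ containing λ₁ and an element λ₂ ∈ Σ such that {λ₁, λ₂} is a basis of Σ whose Gram matrix is M. -/
/-- Gram matrix of the even rank-2 hyperbolic lattice `H`. -/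
def Hgram : Matrix (Fin 2) (Fin 2) ℤ := !![0, 1; 1, 0]

/-- Index type for the K3 lattice `−E₈ ⊕ −E₈ ⊕ H ⊕ H ⊕ H`. -/
abbrev K3Index : Type := (Fin 8 ⊕ Fin 8) ⊕ ((Fin 2 ⊕ Fin 2) ⊕ Fin 2)

/-- Gram matrix of the K3 lattice `−E₈ ⊕ −E₈ ⊕ H ⊕ H ⊕ H`
(the Gram matrix of `E₈` in a root basis is its Cartan matrix). -/
def K3Gram : Matrix K3Index K3Index ℤ :=
  Matrix.fromBlocks
    (Matrix.fromBlocks (-CartanMatrix.E₈) 0 0 (-CartanMatrix.E₈)) 0 0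
    (Matrix.fromBlocks (Matrix.fromBlocks Hgram 0 0 Hgram) 0 0 Hgram)

/-- The K3 lattice as a free `ℤ`-module. -/
abbrev K3Lattice : Type := K3Index → ℤ

/-- The bilinear form of the K3 lattice. -/
def K3Form (x y : K3Lattice) : ℤ := dotProduct x (K3Gram.mulVec y)

/-!
A primitive vector of a unimodular lattice pairs to `1` with some vector, so `(λ₁, w) = 1` for
some `w`. The first basis vectors of the three copies of `H` span a saturated totally isotropic
sublattice of rank 3, which therefore contains a primitive `f` orthogonal to `λ₁` and `w`;
unimodularity again gives `e` with `(f, e) = 1`. Then `λ₂ = k w + e + m f` with `k = b - (λ₁, e)`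
satisfies `(λ₁, λ₂) = b`, and since the lattice is even, a suitable `m` makes `(λ₂, λ₂) = 2d`.
As `(λ₁, f) = 0`, `(λ₂, f) = 1` and `(λ₁, w) = 1`, the functionals `(·, f)` and `(·, w)` read off
the coordinates of an element of `span {λ₁, λ₂}` integrally, which makes that span primitive.
-/

open Matrix

def IsPrimitiveVector (R : Type*) {M : Type*} [Semiring R] [AddCommMonoid M] [Module R M]
    (x : M) : Prop :=
  ∀ (n : R) (c : M), x = n • c → IsUnit n

theorem IsPrimitiveVector.map_of_leftInverse {R M N : Type*} [Semiring R] [AddCommMonoid M]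
    [Module R M] [AddCommMonoid N] [Module R N] {g : M →ₗ[R] N} {g' : N →ₗ[R] M}
    (h : Function.LeftInverse g' g) {x : M} (hx : IsPrimitiveVector R x) :
    IsPrimitiveVector R (g x) :=
  fun n c hc => hx n (g' c) (by rw [← map_smul, ← hc, h x])

section IntVectors

variable {ι : Type*} [Fintype ι]

theorem IsPrimitiveVector.isUnit_gcd {x : ι → ℤ} (hx : IsPrimitiveVector ℤ x) :
    IsUnit (Finset.univ.gcd x) :=
  hx _ (fun i => x i / Finset.univ.gcd x) <| funext fun i =>
    (Int.mul_ediv_cancel' (Finset.gcd_dvd (Finset.mem_univ i))).symm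

theorem IsPrimitiveVector.exists_dotProduct_eq_one {x : ι → ℤ} (hx : IsPrimitiveVector ℤ x) :
    ∃ y, x ⬝ᵥ y = 1 := by
  obtain ⟨u, hu⟩ := hx.isUnit_gcd
  obtain ⟨g, hg⟩ := Finset.univ.gcd_eq_sum_mul x
  refine ⟨(↑u⁻¹ : ℤ) • g, ?_⟩
  rw [dotProduct_smul, dotProduct, ← hg, ← hu, smul_eq_mul, Units.inv_mul]

theorem exists_isPrimitiveVector_smul_eq {v : ι → ℤ} (hv : v ≠ 0) :
    ∃ g : ℤ, g ≠ 0 ∧ ∃ u, IsPrimitiveVector ℤ u ∧ v = g • u := by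
  set g := Finset.univ.gcd v
  have hdvd : ∀ i, g ∣ v i := fun i => Finset.gcd_dvd (Finset.mem_univ i)
  have hg : g ≠ 0 := fun h => hv <| funext fun i =>
    Finset.gcd_eq_zero_iff.mp h i (Finset.mem_univ i)
  refine ⟨g, hg, fun i => v i / g, fun n c hc => ?_,
    funext fun i => (Int.mul_ediv_cancel' (hdvd i)).symm⟩
  have hgn : g * n ∣ g * 1 := by
    rw [mul_one]
    refine Finset.dvd_gcd fun i _ => ⟨c i, ?_⟩
    rw [← Int.mul_ediv_cancel' (hdvd i), congrFun hc i, Pi.smul_apply, smul_eq_mul, mul_assoc]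
  exact isUnit_of_dvd_one ((mul_dvd_mul_iff_left hg).mp hgn)

theorem exists_isPrimitiveVector_mem_ker {κ : Type*} [Fintype κ]
    (f : (ι → ℤ) →ₗ[ℤ] κ → ℤ) (h : Fintype.card κ < Fintype.card ι) :
    ∃ r, IsPrimitiveVector ℤ r ∧ f r = 0 := by
  have hf : ¬ Function.Injective f := fun hf => by
    have := LinearMap.finrank_le_finrank_of_injective hf
    simp only [Module.finrank_fintype_fun_eq_card] at this
    omega
  obtain ⟨v, hv, hv0⟩ : ∃ v, f v = 0 ∧ v ≠ 0 := by
    simpa [injective_iff_map_eq_zero] using hf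
  obtain ⟨g, hg, u, hu, rfl⟩ := exists_isPrimitiveVector_smul_eq hv0
  rw [map_smul] at hv
  exact ⟨u, hu, (smul_eq_zero_iff_right hg).mp hv⟩

theorem Matrix.exists_toBilin'_eq_one_of_isUnit [DecidableEq ι] {G : Matrix ι ι ℤ} (hG : IsUnit G)
    {x : ι → ℤ} (hx : IsPrimitiveVector ℤ x) : ∃ y, G.toBilin' x y = 1 := by
  have hinv : Function.LeftInverse (vecMulLinear G⁻¹) (vecMulLinear G) := fun v => by
    simp [vecMul_vecMul, mul_nonsing_inv G ((isUnit_iff_isUnit_det G).mp hG)]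
  obtain ⟨y, hy⟩ := (hx.map_of_leftInverse hinv).exists_dotProduct_eq_one
  exact ⟨y, by rwa [toBilin'_apply', dotProduct_mulVec]⟩

end IntVectors

section Saturation

variable {R M : Type*} [CommRing R] [AddCommGroup M] [Module R M]
  {l₁ l₂ : M} {φ ψ : M →ₗ[R] R}

theorem linearIndependent_pair_of_dual (hφ₁ : φ l₁ = 0) (hφ₂ : φ l₂ = 1) (hψ₁ : ψ l₁ = 1) :
    LinearIndependent R ![l₁, l₂] := by
  refine LinearIndependent.pair_iff.mpr fun s t hst => ?_
  have ht : t = 0 := by simpa [hφ₁, hφ₂] using congrArg φ hst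
  subst ht
  exact ⟨by simpa [hψ₁] using congrArg ψ hst, rfl⟩

theorem eq_zero_of_mem_span_pair_of_dual (hφ₁ : φ l₁ = 0) (hφ₂ : φ l₂ = 1) (hψ₁ : ψ l₁ = 1)
    {z : M} (hz : z ∈ Submodule.span R {l₁, l₂}) (hφz : φ z = 0) (hψz : ψ z = 0) : z = 0 := by
  obtain ⟨s, t, rfl⟩ := Submodule.mem_span_pair.mp hz
  obtain rfl : t = 0 := by simpa [hφ₁, hφ₂] using hφz
  obtain rfl : s = 0 := by simpa [hψ₁] using hψz
  simp

theorem mem_span_pair_of_smul_mem_of_dual [IsDomain R] [Module.IsTorsionFree R M]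
    (hφ₁ : φ l₁ = 0) (hφ₂ : φ l₂ = 1) (hψ₁ : ψ l₁ = 1) {n : R} (hn : n ≠ 0) {x : M}
    (hx : n • x ∈ Submodule.span R {l₁, l₂}) : x ∈ Submodule.span R {l₁, l₂} := by
  -- the coefficients that `φ` and `ψ` force on any `p` with `n • p = n • x`
  set p := (ψ x - φ x * ψ l₂) • l₁ + φ x • l₂
  have hp : p ∈ Submodule.span R {l₁, l₂} := Submodule.mem_span_pair.mpr ⟨_, _, rfl⟩
  have hxp : n • (x - p) = 0 := by
    refine eq_zero_of_mem_span_pair_of_dual hφ₁ hφ₂ hψ₁ ?_ ?_ ?_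
    · rw [smul_sub]; exact sub_mem hx (Submodule.smul_mem _ n hp)
    · simp [p, hφ₁, hφ₂]
    · simp [p, hψ₁]
  rw [smul_eq_zero_iff_right hn, sub_eq_zero] at hxp
  exact hxp ▸ hp

end Saturation

namespace LinearMap.BilinForm

variable {R M : Type*} [CommRing R] [AddCommGroup M] [Module R M] {B : LinearMap.BilinForm R M}

theorem even_apply_self_of_span_eq_top (hB : B.IsSymm) {s : Set M}
    (hs : Submodule.span R s = ⊤) (heven : ∀ v ∈ s, Even (B v v)) (x : M) : Even (B x x) := by
  induction (hs ▸ Submodule.mem_top : x ∈ Submodule.span R s) using Submodule.span_induction with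
  | mem v hv => exact heven v hv
  | zero => simp
  | add x y _ _ hx hy =>
    have hxy : B (x + y) (x + y) = B x x + B y y + 2 * B x y := by
      rw [map_add, map_add, LinearMap.add_apply, LinearMap.add_apply, hB.eq y x]; ring
    exact hxy ▸ (hx.add hy).add (even_two_mul _)
  | smul c x _ hx => simpa [mul_assoc] using hx.mul_left (c * c)

theorem exists_apply_eq_of_isotropic (hB : B.IsSymm) (heven : ∀ x, Even (B x x)) {l₁ w f e : M}
    (hw : B l₁ w = 1) (hf : B l₁ f = 0) (hwf : B w f = 0) (hff : B f f = 0) (hfe : B f e = 1)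
    (b d : R) : ∃ l₂, B l₁ l₂ = b ∧ B l₂ l₂ = 2 * d ∧ B l₂ f = 1 := by
  obtain ⟨ω, hω⟩ := heven w
  obtain ⟨ε, hε⟩ := heven e
  set k := b - B l₁ e
  -- adding `m • f` changes `B l₂ l₂` by exactly `2 * m`, because `f` is isotropic and `B f e = 1`
  refine ⟨k • w + e + (d - k * k * ω - k * B w e - ε) • f, ?_, ?_, ?_⟩ <;>
    simp only [add_left, add_right, smul_left, smul_right, hB.eq e w, hB.eq f w, hB.eq e f, hw,
      hf, hwf, hff, hfe, hω, hε] <;>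
    ring

theorem exists_primitive_pair_of_isotropic [IsDomain R] [Module.IsTorsionFree R M]
    (hB : B.IsSymm) (heven : ∀ x, Even (B x x)) {l₁ w f e : M} (hw : B l₁ w = 1)
    (hf : B l₁ f = 0) (hwf : B w f = 0) (hff : B f f = 0) (hfe : B f e = 1) (b d : R) :
    ∃ l₂ : M, LinearIndependent R ![l₁, l₂] ∧ B l₁ l₂ = b ∧ B l₂ l₂ = 2 * d ∧
      ∀ (n : R) (x : M), n ≠ 0 → n • x ∈ Submodule.span R {l₁, l₂} →
        x ∈ Submodule.span R {l₁, l₂} := by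
  obtain ⟨l₂, hb, hd, hl₂f⟩ := exists_apply_eq_of_isotropic hB heven hw hf hwf hff hfe b d
  exact ⟨l₂, linearIndependent_pair_of_dual (φ := B.flip f) (ψ := B.flip w) hf hl₂f hw, hb, hd,
    fun n x hn => mem_span_pair_of_smul_mem_of_dual (φ := B.flip f) (ψ := B.flip w) hf hl₂f hw hn⟩

end LinearMap.BilinForm

theorem Matrix.even_toBilin'_self {ι : Type*} [Fintype ι] [DecidableEq ι]
    {G : Matrix ι ι ℤ} (hG : G.IsSymm) (hdiag : ∀ i, Even (G i i)) (x : ι → ℤ) :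
    Even (G.toBilin' x x) := by
  refine LinearMap.BilinForm.even_apply_self_of_span_eq_top (isSymm_toBilin'_iff_isSymm.mpr hG)
    (Pi.basisFun ℤ ι).span_eq ?_ x
  rintro _ ⟨i, rfl⟩
  simpa using hdiag i

def E8inv : Matrix (Fin 8) (Fin 8) ℤ :=
  !![4, 5, 7, 10, 8, 6, 4, 2;
     5, 8, 10, 15, 12, 9, 6, 3;
     7, 10, 14, 20, 16, 12, 8, 4;
     10, 15, 20, 30, 24, 18, 12, 6;
     8, 12, 16, 24, 20, 15, 10, 5;
     6, 9, 12, 18, 15, 12, 8, 4;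
     4, 6, 8, 12, 10, 8, 6, 3;
     2, 3, 4, 6, 5, 4, 3, 2]

theorem E8inv_mul_E₈ : E8inv * CartanMatrix.E₈ = 1 := by decide

theorem isUnit_E₈ : IsUnit CartanMatrix.E₈ :=
  (isUnit_iff_isUnit_det _).mpr (isUnit_det_of_left_inverse E8inv_mul_E₈)

theorem isUnit_Hgram : IsUnit Hgram :=
  (isUnit_iff_isUnit_det _).mpr (isUnit_det_of_left_inverse (by decide : Hgram * Hgram = 1))

theorem isUnit_K3Gram : IsUnit K3Gram := by
  simp [K3Gram, isUnit_E₈.neg, isUnit_Hgram]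

theorem K3Gram_isSymm : K3Gram.IsSymm := by
  have hE : (-CartanMatrix.E₈).IsSymm := CartanMatrix.E₈_isSymm.neg
  have hH : Hgram.IsSymm := by decide
  exact .fromBlocks (.fromBlocks hE (by simp) hE) (by simp)
    (.fromBlocks (.fromBlocks hH (by simp) hH) (by simp) hH)

theorem even_K3Gram_diag (i : K3Index) : Even (K3Gram i i) := by
  revert i; decide

theorem K3Form_eq_toBilin' (x y : K3Lattice) : K3Form x y = K3Gram.toBilin' x y :=
  (toBilin'_apply' K3Gram x y).symm

-- the first basis vector of each of the three copies of `H`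
def hyperbolicSlot : Fin 3 → K3Index :=
  ![.inr (.inl (.inl 0)), .inr (.inl (.inr 0)), .inr (.inr 0)]

theorem hyperbolicSlot_injective : hyperbolicSlot.Injective := by decide

theorem K3Gram_hyperbolicSlot (i j : Fin 3) :
    K3Gram (hyperbolicSlot i) (hyperbolicSlot j) = 0 := by
  revert i j; decide

noncomputable def hyperbolicEmbedding : (Fin 3 → ℤ) →ₗ[ℤ] K3Lattice :=
  Fintype.linearCombination ℤ fun k => Pi.single (hyperbolicSlot k) 1

theorem leftInverse_funLeft_hyperbolicEmbedding :
    Function.LeftInverse (LinearMap.funLeft ℤ ℤ hyperbolicSlot) hyperbolicEmbedding := fun r => by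
  ext k
  simp [hyperbolicEmbedding, Fintype.linearCombination_apply, Finset.sum_apply, Pi.single_apply,
    hyperbolicSlot_injective.eq_iff]

theorem toBilin'_K3Gram_hyperbolicEmbedding (r s : Fin 3 → ℤ) :
    K3Gram.toBilin' (hyperbolicEmbedding r) (hyperbolicEmbedding s) = 0 := by
  have h : (K3Gram.toBilin').compl₁₂ hyperbolicEmbedding hyperbolicEmbedding = 0 :=
    LinearMap.ext_basis (Pi.basisFun ℤ (Fin 3)) (Pi.basisFun ℤ (Fin 3)) fun i j => by
      simp [hyperbolicEmbedding, K3Gram_hyperbolicSlot]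
  exact LinearMap.congr_fun₂ h r s

theorem exists_isPrimitiveVector_isotropic_orthogonal (x y : K3Lattice) :
    ∃ f, IsPrimitiveVector ℤ f ∧ K3Gram.toBilin' f f = 0 ∧ K3Gram.toBilin' x f = 0 ∧
      K3Gram.toBilin' y f = 0 := by
  let φ : (Fin 3 → ℤ) →ₗ[ℤ] Fin 2 → ℤ := LinearMap.pi
    ![(K3Gram.toBilin' x).comp hyperbolicEmbedding, (K3Gram.toBilin' y).comp hyperbolicEmbedding]
  obtain ⟨r, hr, hφr⟩ := exists_isPrimitiveVector_mem_ker φ (by simp)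
  exact ⟨hyperbolicEmbedding r, hr.map_of_leftInverse leftInverse_funLeft_hyperbolicEmbedding,
    toBilin'_K3Gram_hyperbolicEmbedding r r, congrFun hφr 0, congrFun hφr 1⟩

theorem k3_rank_two_primitive_sublattice_general
    (b d : ℤ) (l₁ : K3Lattice)
    (hprim : ∀ (n : ℤ) (c : K3Lattice), l₁ = n • c → IsUnit n) :
    ∃ l₂ : K3Lattice,
      LinearIndependent ℤ ![l₁, l₂]
      ∧ K3Form l₁ l₂ = b
      ∧ K3Form l₂ l₂ = 2 * d
      ∧ (∀ (n : ℤ) (x : K3Lattice), n ≠ 0 →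
          n • x ∈ Submodule.span ℤ ({l₁, l₂} : Set K3Lattice) →
          x ∈ Submodule.span ℤ ({l₁, l₂} : Set K3Lattice)) := by
  obtain ⟨w, hw⟩ := exists_toBilin'_eq_one_of_isUnit isUnit_K3Gram hprim
  obtain ⟨f, hf, hff, hl₁f, hwf⟩ := exists_isPrimitiveVector_isotropic_orthogonal l₁ w
  obtain ⟨e, hfe⟩ := exists_toBilin'_eq_one_of_isUnit isUnit_K3Gram hf
  simp only [K3Form_eq_toBilin']
  exact K3Gram.toBilin'.exists_primitive_pair_of_isotropic
    (isSymm_toBilin'_iff_isSymm.mpr K3Gram_isSymm)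
    (even_toBilin'_self K3Gram_isSymm even_K3Gram_diag) hw hl₁f hwf hff hfe b d

/-- given a symmetric integer matrix `M = [[2a,b],[b,2d]]` and a
primitive element `λ₁` of the K3 lattice with `(λ₁,λ₁) = 2a`, there is a
primitive rank-2 sublattice `Σ` containing `λ₁` with a basis `{λ₁,λ₂}` whose
Gram matrix is `M`. -/
theorem k3_rank_two_primitive_sublattice
    (a b d : ℤ) (l₁ : K3Lattice)
    (hprim : ∀ (n : ℤ) (c : K3Lattice), l₁ = n • c → IsUnit n)
    (h₁ : K3Form l₁ l₁ = 2 * a) :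
    ∃ l₂ : K3Lattice,
      LinearIndependent ℤ ![l₁, l₂]
      ∧ K3Form l₁ l₂ = b
      ∧ K3Form l₂ l₂ = 2 * d
      ∧ (∀ (n : ℤ) (x : K3Lattice), n ≠ 0 →
          n • x ∈ Submodule.span ℤ ({l₁, l₂} : Set K3Lattice) →
          x ∈ Submodule.span ℤ ({l₁, l₂} : Set K3Lattice)) :=
  k3_rank_two_primitive_sublattice_general b d l₁ hprim
end
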